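/- For all t > 0, the function x(t) = t/(t² + 1) is differentiable with x'(t) = (1 − t²)/(t² + 1)², and with z(t) = (2t² + 1)^{3/2}/(t(t² + 1)) one has x'(t)² + z'(t)² = (t² − 1)²/(t⁴(t² + 1)²). -/

import Mathlib

/-!
Both derivatives are computed by the quotient rule. Writing `u = 2t² + 1`, the numerator of `z'`
collapses to `√u (t² - 1)` because `6t²(t² + 1) - (2t² + 1)(3t² + 1) = t² - 1`. Then
`x'² + z'² = (t² - 1)² (t⁴ + u) / (t⁴ (t² + 1)⁴)`, and `t⁴ + u = (t² + 1)²`.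
-/

open Real

theorem hasDerivAt_div_sq_add_one (t : ℝ) :
    HasDerivAt (fun t : ℝ => t / (t ^ 2 + 1)) ((1 - t ^ 2) / (t ^ 2 + 1) ^ 2) t := by
  have hden : t ^ 2 + 1 ≠ 0 := by positivity
  refine ((hasDerivAt_id' t).div ((hasDerivAt_pow 2 t).add_const 1) hden).congr_deriv ?_
  field_simp
  ring

theorem rpow_three_halves_eq_mul_sqrt {u : ℝ} (hu : 0 ≤ u) : u ^ ((3 : ℝ) / 2) = u * √u := by
  rw [sqrt_eq_rpow, ← rpow_one_add' hu (by norm_num)]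
  norm_num

theorem hasDerivAt_rpow_three_halves_div {t : ℝ} (ht : t ≠ 0) :
    HasDerivAt (fun t : ℝ => (2 * t ^ 2 + 1) ^ ((3 : ℝ) / 2) / (t * (t ^ 2 + 1)))
      (√(2 * t ^ 2 + 1) * (t ^ 2 - 1) / (t ^ 2 * (t ^ 2 + 1) ^ 2)) t := by
  have hu : 0 < 2 * t ^ 2 + 1 := by positivity
  have hnum : HasDerivAt (fun t : ℝ => (2 * t ^ 2 + 1) ^ ((3 : ℝ) / 2))
      (2 * (2 * t) * ((3 : ℝ) / 2) * (2 * t ^ 2 + 1) ^ ((3 : ℝ) / 2 - 1)) t := by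
    refine HasDerivAt.rpow_const ?_ (Or.inl hu.ne')
    simpa using ((hasDerivAt_pow 2 t).const_mul 2).add_const 1
  have hden : HasDerivAt (fun t : ℝ => t * (t ^ 2 + 1)) (1 * (t ^ 2 + 1) + t * (2 * t)) t := by
    exact ((hasDerivAt_id' t).mul ((hasDerivAt_pow 2 t).add_const 1)).congr_deriv (by simp)
  refine (hnum.div hden (by positivity)).congr_deriv ?_
  rw [rpow_three_halves_eq_mul_sqrt hu.le, show (3 : ℝ) / 2 - 1 = 1 / 2 by norm_num,
    ← sqrt_eq_rpow]
  field_simp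
  ring

/-- For all `t > 0`, `x(t) = t/(t² + 1)` is differentiable with
`x'(t) = (1 − t²)/(t² + 1)²`, and with `z(t) = (2t² + 1)^{3/2}/(t(t² + 1))` one has
`x'(t)² + z'(t)² = (t² − 1)²/(t⁴(t² + 1)²)`. -/
theorem stmt_14 (t : ℝ) (ht : 0 < t) :
    HasDerivAt (fun t : ℝ => t / (t ^ 2 + 1)) ((1 - t ^ 2) / (t ^ 2 + 1) ^ 2) t ∧
    (deriv (fun t : ℝ => t / (t ^ 2 + 1)) t) ^ 2 +
      (deriv (fun t : ℝ => (2 * t ^ 2 + 1) ^ ((3 : ℝ) / 2) / (t * (t ^ 2 + 1))) t) ^ 2 =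
      (t ^ 2 - 1) ^ 2 / (t ^ 4 * (t ^ 2 + 1) ^ 2) := by
  have hx := hasDerivAt_div_sq_add_one t
  refine ⟨hx, ?_⟩
  rw [hx.deriv, (hasDerivAt_rpow_three_halves_div ht.ne').deriv, div_pow, div_pow, mul_pow,
    sq_sqrt (by positivity)]
  field_simp
  ring
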